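/- arXiv:0712.0027 — 3 statements merged into one kernel-verified Lean document; each statement's English description precedes it below -/
import Mathlib

section
/- Let L be a graded lattice of rank d+1 (e.g., the face lattice of a d-polytope) in which every interval [G, top] with rank(G) < rank(top) satisfies Euler's relation, i.e. the alternating sum ∑_{j} (−1)^j f_j([G, top]) is zero. Then for any k < d, ∑_{F ∈ L, F ≠ bottom} (−1)^{d − dim F} · f_k(F) = 0, where dim F = rank(F) − 1 and f_k(F) counts elements of rank k+1 below F. -/
private lemma rk_mono_aux {L : Type*} [Lattice L] [BoundedOrder L] [Fintype L]
    (rk : L → ℕ) (hgrade : ∀ a b : L, a ⋖ b → rk b = rk a + 1) :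
    ∀ a b : L, a ≤ b → rk a ≤ rk b := by
  classical
  haveI : LocallyFiniteOrder L := Fintype.toLocallyFiniteOrder
  intro a b
  induction b using WellFoundedLT.induction with
  | ind b ih =>
    intro hab
    rcases eq_or_lt_of_le hab with rfl | hlt
    · exact le_rfl
    · obtain ⟨c, hac, hcb⟩ := exists_le_covBy_of_lt hlt
      have := hgrade c b hcb
      have := ih c hcb.lt hac
      omega

/-- Abstract version of Lemma 4.3 for a graded lattice of rank `d+1` in which
every upper interval `[G, ⊤]` with `rk G < d+1` satisfies Euler's relation. -/
theorem graded_lattice_alternating_sum {L : Type*} [Lattice L] [BoundedOrder L]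
    [Fintype L] (d : ℕ) (rk : L → ℕ)
    (hbot : rk ⊥ = 0) (htop : rk ⊤ = d + 1)
    (hgrade : ∀ a b : L, a ⋖ b → rk b = rk a + 1)
    (heuler : ∀ G : L, rk G < d + 1 →
      ∑ᶠ F ∈ {F : L | G ≤ F}, (-1 : ℤ)^(rk F) = 0)
    (k : ℕ) (hk : k < d) :
    ∑ᶠ F ∈ {F : L | F ≠ ⊥},
      (-1 : ℤ)^(d + 1 - rk F) * (Nat.card {G : L // G ≤ F ∧ rk G = k + 1} : ℤ)
      = 0 := by
  classical
  have hmono := rk_mono_aux rk hgrade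
  have hle : ∀ F : L, rk F ≤ d + 1 := fun F => htop ▸ hmono F ⊤ le_top
  -- sign identity
  have hsgn : ∀ F : L, ((-1 : ℤ)^(d + 1 - rk F)) = (-1)^(d+1) * (-1)^(rk F) := by
    intro F
    have h : d + 1 + rk F = (d + 1 - rk F) + 2 * rk F := by have := hle F; omega
    rw [← pow_add, h, pow_add, pow_mul, neg_one_sq, one_pow, mul_one]
  -- convert finsums to Finset sums
  have hconv : ∀ (s : Set L) (f : L → ℤ), ∑ᶠ F ∈ s, f F
      = ∑ F : L, if F ∈ s then f F else 0 := by
    intro s f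
    rw [finsum_mem_def, finsum_eq_sum_of_fintype]
    exact Finset.sum_congr rfl (fun x _ => Set.indicator_apply s f x)
  rw [hconv]
  have hcard : ∀ F : L, (Nat.card {G : L // G ≤ F ∧ rk G = k + 1} : ℤ)
      = ∑ G : L, if G ≤ F ∧ rk G = k + 1 then (1 : ℤ) else 0 := by
    intro F
    rw [Nat.card_eq_fintype_card, Fintype.card_subtype, Finset.card_filter]
    push_cast
    exact Finset.sum_congr rfl (fun G _ => by by_cases h : G ≤ F ∧ rk G = k + 1 <;> simp [h])
  calc _ = ∑ F : L, ∑ G : L,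
          if F ≠ ⊥ ∧ G ≤ F ∧ rk G = k + 1 then (-1 : ℤ)^(d + 1 - rk F) else 0 := by
        refine Finset.sum_congr rfl (fun F _ => ?_)
        simp only [Set.mem_setOf_eq]
        by_cases hF : F ≠ ⊥
        · rw [if_pos hF, hcard, Finset.mul_sum]
          refine Finset.sum_congr rfl (fun G _ => ?_)
          by_cases hG : G ≤ F ∧ rk G = k + 1 <;> simp [hG, hF]
        · rw [if_neg hF]
          symm; apply Finset.sum_eq_zero
          intro G _
          simp [hF]
    _ = ∑ G : L, ∑ F : L,
          if F ≠ ⊥ ∧ G ≤ F ∧ rk G = k + 1 then (-1 : ℤ)^(d + 1 - rk F) else 0 :=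
        Finset.sum_comm
    _ = 0 := by
        apply Finset.sum_eq_zero
        intro G _
        by_cases hG : rk G = k + 1
        · -- G ≠ ⊥ since rk G = k+1 ≠ 0
          have hGbot : G ≠ ⊥ := fun h => by rw [h, hbot] at hG; omega
          have hFne : ∀ F : L, G ≤ F → F ≠ ⊥ := fun F hGF h => by
            rw [h, le_bot_iff] at hGF; exact hGbot hGF
          have he := heuler G (by omega)
          rw [hconv] at he
          calc ∑ F : L, (if F ≠ ⊥ ∧ G ≤ F ∧ rk G = k + 1 then (-1 : ℤ)^(d + 1 - rk F) else 0)
              = ∑ F : L, (-1 : ℤ)^(d+1) *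
                  (if F ∈ {F : L | G ≤ F} then (-1 : ℤ)^(rk F) else 0) := by
                refine Finset.sum_congr rfl (fun F _ => ?_)
                by_cases hGF : G ≤ F
                · simp only [Set.mem_setOf_eq, hGF, if_true]
                  simp [hGF, hFne F hGF, hG, hsgn F]
                · simp [hGF]
            _ = (-1 : ℤ)^(d+1) * ∑ F : L,
                  (if F ∈ {F : L | G ≤ F} then (-1 : ℤ)^(rk F) else 0) := by
                rw [Finset.mul_sum]
            _ = 0 := by rw [he, mul_zero]
        · apply Finset.sum_eq_zero
          intro F _
          simp [hG]
end

section
/- Let P be an Eulerian poset of rank d, so that its proper elements have dimensions 0,...,d−1, with extended f-vector f_S counting chains of elements with dimension set S. Then ∑_{k=0}^{d−1} (−1)^k · k · ( ∑_{i=0}^{k} f_{i, i+d−1−k} − f_k − f_{d−1−k} ) = 0, where f_{i,j} counts pairs of elements x ≤ y with dim x = i, dim y = j (with f_{i,i} := f_i), and f_k counts elements of dimension k. -/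
/-- Flag number `f_{i,j}` of a poset with rank function `rk` (dimensions are
`rk − 1`): the number of pairs `x ≤ y` with `dim x = i`, `dim y = j`; for
`i = j` this is the number of elements of dimension `i`. -/
noncomputable def flagTwo {L : Type*} [PartialOrder L] (rk : L → ℕ) (i j : ℤ) : ℕ :=
  Nat.card {p : L × L // p.1 ≤ p.2 ∧ (rk p.1 : ℤ) - 1 = i ∧ (rk p.2 : ℤ) - 1 = j}

private lemma neg_one_pow_sub' (a b : ℕ) (h : a ≤ b) :
    (-1 : ℤ) ^ (b - a) = (-1) ^ b * (-1) ^ a := by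
  have : (-1 : ℤ) ^ (b - a) * ((-1) ^ a * (-1) ^ a) = (-1) ^ b * (-1) ^ a := by
    rw [← mul_assoc, ← pow_add, Nat.sub_add_cancel h]
  have ha : (-1 : ℤ) ^ a * (-1) ^ a = 1 := by
    rw [← pow_add]
    exact Even.neg_one_pow ⟨a, by omega⟩
  rw [ha, mul_one] at this
  rw [this]

/-- Theorem 1.6: for an Eulerian poset of rank `d` (bottom of dimension −1, top
of dimension `d`, proper dimensions `0,…,d−1`),
`∑_{k=0}^{d−1} (−1)^k k (∑_{i=0}^k f_{i,i+d−1−k} − f_k − f_{d−1−k}) = 0`. -/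
theorem eulerian_poset_relation {L : Type*} [PartialOrder L] [BoundedOrder L]
    [Fintype L] (d : ℕ) (rk : L → ℕ)
    (hbot : rk ⊥ = 0) (htop : rk ⊤ = d + 1)
    (hgrade : ∀ a b : L, a ⋖ b → rk b = rk a + 1)
    (heuler : ∀ a b : L, a < b →
      ∑ᶠ z ∈ {z : L | a ≤ z ∧ z ≤ b}, (-1 : ℤ)^(rk z) = 0) :
    ∑ k ∈ Finset.range d, (-1 : ℤ)^k * k *
      ((∑ i ∈ Finset.range (k + 1),
          (flagTwo rk (i : ℤ) ((i : ℤ) + d - 1 - k) : ℤ))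
        - (Nat.card {x : L // (rk x : ℤ) - 1 = (k : ℤ)} : ℤ)
        - (Nat.card {x : L // (rk x : ℤ) - 1 = (d : ℤ) - 1 - k} : ℤ)) = 0 := by
  classical
  rcases Nat.eq_zero_or_pos d with hd0 | hdpos
  · subst hd0; simp
  have hbt : (⊥ : L) ≠ ⊤ := fun h => by rw [h, htop] at hbot; omega
  have hblt : (⊥ : L) < ⊤ := lt_of_le_of_ne bot_le hbt
  -- strict monotonicity of rk
  have hmono : ∀ a b : L, a < b → rk a < rk b := by
    intro a
    induction a using WellFoundedGT.induction with
    | _ a ih =>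
      intro b hab
      obtain ⟨x, hax, hxb⟩ := exists_covBy_le_of_lt hab
      have h1 : rk a < rk x := by rw [hgrade a x hax]; omega
      rcases eq_or_lt_of_le hxb with rfl | h
      · exact h1
      · exact h1.trans (ih x hax.lt b h)
  have hle_rk : ∀ a b : L, a ≤ b → rk a ≤ rk b := by
    intro a b hab
    rcases eq_or_lt_of_le hab with rfl | h
    · exact le_rfl
    · exact (hmono a b h).le
  have hrk1 : ∀ z : L, z ≠ ⊥ → 1 ≤ rk z := by
    intro z hz
    have := hmono ⊥ z (lt_of_le_of_ne bot_le (Ne.symm hz))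
    omega
  have hrkd : ∀ z : L, z ≠ ⊤ → rk z ≤ d := by
    intro z hz
    have := hmono z ⊤ (lt_of_le_of_ne le_top hz)
    omega
  -- Euler relations as Finset sums
  have euler' : ∀ a b : L, a < b →
      ∑ z ∈ Finset.univ.filter (fun z => a ≤ z ∧ z ≤ b), (-1 : ℤ)^(rk z) = 0 := by
    intro a b h
    have h2 := heuler a b h
    rwa [show {z : L | a ≤ z ∧ z ≤ b} =
        ↑(Finset.univ.filter (fun z => a ≤ z ∧ z ≤ b)) by ext z; simp,
      finsum_mem_coe_finset] at h2
  set G : L → ℤ := fun z => (-1 : ℤ)^(rk z) with hG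
  set P : Finset L := (Finset.univ.erase ⊥).erase ⊤ with hP
  have hmemP : ∀ z : L, z ∈ P ↔ z ≠ ⊥ ∧ z ≠ ⊤ := by
    intro z; simp [hP, and_comm]
  have hglobal : ∑ z : L, G z = 0 := by
    have := euler' ⊥ ⊤ hblt
    simpa using this
  have htopP : (⊤ : L) ∈ Finset.univ.erase ⊥ := by
    simp [Ne.symm hbt]
  have h3 : ∑ z ∈ P, G z = (-1 : ℤ)^d - 1 := by
    rw [hP, Finset.sum_erase_eq_sub htopP, Finset.sum_erase_eq_sub (Finset.mem_univ ⊥),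
      hglobal]
    simp [hG, hbot, htop, pow_succ]
    ring
  have h1 : ∀ x ∈ P, ∑ y ∈ P.filter (fun y => x ≤ y), G y = (-1 : ℤ)^d := by
    intro x hx
    rw [hmemP] at hx
    have hfull : ∑ y ∈ Finset.univ.filter (fun y => x ≤ y), G y = 0 := by
      have := euler' x ⊤ (lt_of_le_of_ne le_top hx.2)
      simpa using this
    have hset : P.filter (fun y => x ≤ y) =
        (Finset.univ.filter (fun y => x ≤ y)).erase ⊤ := by
      ext z
      simp only [Finset.mem_erase, Finset.mem_filter, Finset.mem_univ, true_and, hmemP]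
      constructor
      · rintro ⟨⟨h1, h2⟩, h3⟩; exact ⟨h2, h3⟩
      · rintro ⟨h1, h2⟩
        refine ⟨⟨fun hz => ?_, h1⟩, h2⟩
        rw [hz, le_bot_iff] at h2
        exact hx.1 h2
    rw [hset, Finset.sum_erase_eq_sub (by simp : (⊤:L) ∈ _), hfull, hG]
    simp [htop, pow_succ]
  have h2 : ∀ y ∈ P, ∑ x ∈ P.filter (fun x => x ≤ y), G x = -1 := by
    intro y hy
    rw [hmemP] at hy
    have hfull : ∑ x ∈ Finset.univ.filter (fun x => x ≤ y), G x = 0 := by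
      have := euler' ⊥ y (lt_of_le_of_ne bot_le (Ne.symm hy.1))
      simpa using this
    have hset : P.filter (fun x => x ≤ y) =
        (Finset.univ.filter (fun x => x ≤ y)).erase ⊥ := by
      ext z
      simp only [Finset.mem_erase, Finset.mem_filter, Finset.mem_univ, true_and, hmemP]
      constructor
      · rintro ⟨⟨h1, h2⟩, h3⟩; exact ⟨h1, h3⟩
      · rintro ⟨h1, h2⟩
        refine ⟨⟨h1, fun hz => ?_⟩, h2⟩
        rw [hz] at h2
        exact hy.2 (top_le_iff.mp h2)
    rw [hset, Finset.sum_erase_eq_sub (by simp : (⊥:L) ∈ _), hfull, hG]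
    simp [hbot]
  -- generic card-to-sum conversions
  have hcard_gen : ∀ (q : L → Prop), (Nat.card {x : L // q x} : ℤ) =
      ∑ z : L, if q z then (1:ℤ) else 0 := by
    intro q
    rw [Nat.card_eq_fintype_card, Fintype.card_subtype, Finset.card_filter]
    push_cast
    rfl
  have hpcard_gen : ∀ (q : L × L → Prop), (Nat.card {p : L × L // q p} : ℤ) =
      ∑ p ∈ Finset.univ ×ˢ Finset.univ, if q p then (1:ℤ) else 0 := by
    intro q
    rw [Nat.card_eq_fintype_card, Fintype.card_subtype, Finset.card_filter,
      Finset.univ_product_univ]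
    push_cast
    rfl
  -- conversion of the three cardinality expressions
  have claimB : ∀ k ∈ Finset.range d,
      (Nat.card {x : L // (rk x : ℤ) - 1 = (k : ℤ)} : ℤ)
        = ∑ z ∈ P, if rk z = k + 1 then (1:ℤ) else 0 := by
    intro k hk
    rw [Finset.mem_range] at hk
    rw [hcard_gen]
    have hiff : ∀ z : L, ((rk z : ℤ) - 1 = (k : ℤ)) ↔ rk z = k + 1 := by
      intro z; omega
    simp only [hiff]
    refine (Finset.sum_subset (Finset.subset_univ P) ?_).symm
    intro z _ hz
    simp only [ite_eq_right_iff]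
    intro hq
    refine absurd ?_ hz
    rw [hmemP]
    constructor
    · intro h; rw [h, hbot] at hq; omega
    · intro h; rw [h, htop] at hq; omega
  have claimB' : ∀ k ∈ Finset.range d,
      (Nat.card {x : L // (rk x : ℤ) - 1 = (d : ℤ) - 1 - k} : ℤ)
        = ∑ z ∈ P, if rk z = d - k then (1:ℤ) else 0 := by
    intro k hk
    rw [Finset.mem_range] at hk
    rw [hcard_gen]
    have hiff : ∀ z : L, ((rk z : ℤ) - 1 = (d : ℤ) - 1 - k) ↔ rk z = d - k := by
      intro z; omega
    simp only [hiff]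
    refine (Finset.sum_subset (Finset.subset_univ P) ?_).symm
    intro z _ hz
    simp only [ite_eq_right_iff]
    intro hq
    refine absurd ?_ hz
    rw [hmemP]
    constructor
    · intro h; rw [h, hbot] at hq; omega
    · intro h; rw [h, htop] at hq; omega
  have claimA : ∀ k ∈ Finset.range d,
      (∑ i ∈ Finset.range (k + 1), (flagTwo rk (i : ℤ) ((i : ℤ) + d - 1 - k) : ℤ))
        = ∑ p ∈ P ×ˢ P,
            if p.1 ≤ p.2 ∧ rk p.2 = rk p.1 + (d - 1 - k) then (1:ℤ) else 0 := by
    intro k hk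
    rw [Finset.mem_range] at hk
    have step1 : ∀ i ∈ Finset.range (k + 1),
        (flagTwo rk (i : ℤ) ((i : ℤ) + d - 1 - k) : ℤ)
          = ∑ p ∈ P ×ˢ P,
              if p.1 ≤ p.2 ∧ rk p.1 = i + 1 ∧ rk p.2 = i + 1 + (d - 1 - k)
                then (1:ℤ) else 0 := by
      intro i hi
      rw [Finset.mem_range] at hi
      rw [flagTwo, hpcard_gen]
      have hiff : ∀ p : L × L,
          (p.1 ≤ p.2 ∧ (rk p.1 : ℤ) - 1 = (i : ℤ) ∧ (rk p.2 : ℤ) - 1 = (i : ℤ) + d - 1 - k)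
            ↔ (p.1 ≤ p.2 ∧ rk p.1 = i + 1 ∧ rk p.2 = i + 1 + (d - 1 - k)) := by
        intro p
        constructor <;> rintro ⟨h1, h2, h3⟩ <;> exact ⟨h1, by omega, by omega⟩
      simp only [hiff]
      refine (Finset.sum_subset
        (Finset.product_subset_product (Finset.subset_univ P) (Finset.subset_univ P)) ?_).symm
      intro p _ hp
      simp only [ite_eq_right_iff]
      rintro ⟨hle, hr1, hr2⟩
      refine absurd (Finset.mem_product.mpr ⟨?_, ?_⟩) hp
      · rw [hmemP]
        constructor
        · intro h; rw [h, hbot] at hr1; omega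
        · intro h; rw [h, htop] at hr1; omega
      · rw [hmemP]
        constructor
        · intro h; rw [h, hbot] at hr2; omega
        · intro h; rw [h, htop] at hr2; omega
    rw [Finset.sum_congr rfl step1, Finset.sum_comm]
    refine Finset.sum_congr rfl ?_
    intro p hp
    rw [Finset.mem_product] at hp
    have hp1 : 1 ≤ rk p.1 := hrk1 p.1 ((hmemP p.1).mp hp.1).1
    have hp2 : rk p.2 ≤ d := hrkd p.2 ((hmemP p.2).mp hp.2).2
    by_cases hc : p.1 ≤ p.2 ∧ rk p.2 = rk p.1 + (d - 1 - k)
    · rw [if_pos hc]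
      have hk1 : rk p.1 - 1 ∈ Finset.range (k + 1) := by
        rw [Finset.mem_range]; omega
      rw [Finset.sum_eq_single_of_mem (rk p.1 - 1) hk1 ?_]
      · rw [if_pos ⟨hc.1, by omega, by omega⟩]
      · intro j hj hne
        rw [Finset.mem_range] at hj
        rw [if_neg]
        rintro ⟨-, hj1, -⟩
        omega
    · rw [if_neg hc]
      refine Finset.sum_eq_zero ?_
      intro j hj
      rw [if_neg]
      rintro ⟨h1, h2, h3⟩
      exact hc ⟨h1, by omega⟩
  -- per-element collapses of the k-sums
  have key1 : ∀ p ∈ P ×ˢ P,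
      (∑ k ∈ Finset.range d, (-1 : ℤ)^k * k *
        (if p.1 ≤ p.2 ∧ rk p.2 = rk p.1 + (d - 1 - k) then (1:ℤ) else 0))
      = if p.1 ≤ p.2 then
          (-1 : ℤ)^(d-1) * G p.1 * G p.2 * ((d:ℤ) - 1 - rk p.2 + rk p.1) else 0 := by
    intro p hp
    rw [Finset.mem_product] at hp
    have hp1 : 1 ≤ rk p.1 := hrk1 p.1 ((hmemP p.1).mp hp.1).1
    have hp1' : rk p.1 ≤ d := hrkd p.1 ((hmemP p.1).mp hp.1).2
    have hp2 : rk p.2 ≤ d := hrkd p.2 ((hmemP p.2).mp hp.2).2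
    have hp2' : 1 ≤ rk p.2 := hrk1 p.2 ((hmemP p.2).mp hp.2).1
    by_cases hle : p.1 ≤ p.2
    · have hr12 : rk p.1 ≤ rk p.2 := hle_rk _ _ hle
      rw [if_pos hle]
      have hk0 : d - 1 - (rk p.2 - rk p.1) ∈ Finset.range d := by
        rw [Finset.mem_range]; omega
      rw [Finset.sum_eq_single_of_mem (d - 1 - (rk p.2 - rk p.1)) hk0 ?_]
      · rw [if_pos ⟨hle, by omega⟩, mul_one]
        have e1 : ((d - 1 - (rk p.2 - rk p.1) : ℕ) : ℤ) = (d:ℤ) - 1 - rk p.2 + rk p.1 := by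
          omega
        have e2 : (-1 : ℤ)^(d - 1 - (rk p.2 - rk p.1))
            = (-1)^(d-1) * ((-1)^(rk p.2) * (-1)^(rk p.1)) := by
          rw [neg_one_pow_sub' _ _ (by omega : rk p.2 - rk p.1 ≤ d - 1),
            neg_one_pow_sub' _ _ hr12]
        rw [e1, e2]
        simp only [hG]
        ring
      · intro j hj hne
        rw [Finset.mem_range] at hj
        rw [if_neg, mul_zero]
        rintro ⟨-, h2⟩
        omega
    · rw [if_neg hle]
      refine Finset.sum_eq_zero ?_
      intro j hj
      rw [if_neg, mul_zero]
      rintro ⟨h1, -⟩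
      exact hle h1
  have key2 : ∀ z ∈ P,
      (∑ k ∈ Finset.range d, (-1 : ℤ)^k * k * (if rk z = k + 1 then (1:ℤ) else 0))
      = -(G z) * ((rk z : ℤ) - 1) := by
    intro z hz
    have hz1 : 1 ≤ rk z := hrk1 z ((hmemP z).mp hz).1
    have hz2 : rk z ≤ d := hrkd z ((hmemP z).mp hz).2
    have hk0 : rk z - 1 ∈ Finset.range d := by rw [Finset.mem_range]; omega
    rw [Finset.sum_eq_single_of_mem (rk z - 1) hk0 ?_]
    · rw [if_pos (by omega), mul_one]
      have e1 : ((rk z - 1 : ℕ) : ℤ) = (rk z : ℤ) - 1 := by omega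
      have e2 : (-1 : ℤ)^(rk z - 1) = (-1)^(rk z) * (-1)^1 :=
        neg_one_pow_sub' 1 (rk z) hz1
      rw [e1, e2]
      simp only [hG]
      ring
    · intro j hj hne
      rw [if_neg (by omega), mul_zero]
  have key3 : ∀ z ∈ P,
      (∑ k ∈ Finset.range d, (-1 : ℤ)^k * k * (if rk z = d - k then (1:ℤ) else 0))
      = (-1 : ℤ)^d * G z * ((d : ℤ) - rk z) := by
    intro z hz
    have hz1 : 1 ≤ rk z := hrk1 z ((hmemP z).mp hz).1
    have hz2 : rk z ≤ d := hrkd z ((hmemP z).mp hz).2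
    have hk0 : d - rk z ∈ Finset.range d := by rw [Finset.mem_range]; omega
    rw [Finset.sum_eq_single_of_mem (d - rk z) hk0 ?_]
    · rw [if_pos (by omega), mul_one]
      have e1 : ((d - rk z : ℕ) : ℤ) = (d : ℤ) - rk z := by omega
      have e2 : (-1 : ℤ)^(d - rk z) = (-1)^d * (-1)^(rk z) :=
        neg_one_pow_sub' (rk z) d hz2
      rw [e1, e2]
      try simp only [hG]
      try ring
    · intro j hj hne
      rw [Finset.mem_range] at hj
      rw [if_neg (by omega), mul_zero]
  -- assemble
  have main : ∀ k ∈ Finset.range d, (-1 : ℤ)^k * k *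
      ((∑ i ∈ Finset.range (k + 1),
          (flagTwo rk (i : ℤ) ((i : ℤ) + d - 1 - k) : ℤ))
        - (Nat.card {x : L // (rk x : ℤ) - 1 = (k : ℤ)} : ℤ)
        - (Nat.card {x : L // (rk x : ℤ) - 1 = (d : ℤ) - 1 - k} : ℤ))
      = (∑ p ∈ P ×ˢ P, (-1 : ℤ)^k * k *
          (if p.1 ≤ p.2 ∧ rk p.2 = rk p.1 + (d - 1 - k) then (1:ℤ) else 0))
        - (∑ z ∈ P, (-1 : ℤ)^k * k * (if rk z = k + 1 then (1:ℤ) else 0))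
        - (∑ z ∈ P, (-1 : ℤ)^k * k * (if rk z = d - k then (1:ℤ) else 0)) := by
    intro k hk
    rw [claimA k hk, claimB k hk, claimB' k hk, ← Finset.mul_sum, ← Finset.mul_sum,
      ← Finset.mul_sum]
    ring
  rw [Finset.sum_congr rfl main, Finset.sum_sub_distrib, Finset.sum_sub_distrib,
    Finset.sum_comm, Finset.sum_comm (t := P), Finset.sum_comm (t := P),
    Finset.sum_congr rfl key1, Finset.sum_congr rfl key2, Finset.sum_congr rfl key3]
  -- evaluate the double sums using the Euler relations
  have hB : ∑ p ∈ P ×ˢ P, (if p.1 ≤ p.2 then G p.1 * G p.2 else 0)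
      = (-1:ℤ)^d * ∑ z ∈ P, G z := by
    rw [Finset.sum_product]
    have hinner : ∀ x ∈ P, (∑ y ∈ P, if x ≤ y then G x * G y else 0)
        = G x * (-1:ℤ)^d := by
      intro x hx
      rw [← Finset.sum_filter, ← Finset.mul_sum, h1 x hx]
    rw [Finset.sum_congr rfl hinner, ← Finset.sum_mul, mul_comm]
  have hD : ∑ p ∈ P ×ˢ P, (if p.1 ≤ p.2 then G p.1 * G p.2 * (rk p.1 : ℤ) else 0)
      = (-1:ℤ)^d * ∑ z ∈ P, G z * (rk z : ℤ) := by
    rw [Finset.sum_product]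
    have hinner : ∀ x ∈ P, (∑ y ∈ P, if x ≤ y then G x * G y * (rk x : ℤ) else 0)
        = (G x * (rk x : ℤ)) * (-1:ℤ)^d := by
      intro x hx
      rw [← Finset.sum_filter]
      rw [Finset.sum_congr rfl (fun y _ => by ring :
        ∀ y ∈ P.filter (fun y => x ≤ y), G x * G y * (rk x : ℤ) = (G x * (rk x:ℤ)) * G y)]
      rw [← Finset.mul_sum, h1 x hx]
    rw [Finset.sum_congr rfl hinner, ← Finset.sum_mul, mul_comm]
  have hC : ∑ p ∈ P ×ˢ P, (if p.1 ≤ p.2 then G p.1 * G p.2 * (rk p.2 : ℤ) else 0)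
      = -(∑ z ∈ P, G z * (rk z : ℤ)) := by
    rw [Finset.sum_product, Finset.sum_comm]
    have hinner : ∀ y ∈ P, (∑ x ∈ P, if x ≤ y then G x * G y * (rk y : ℤ) else 0)
        = (G y * (rk y : ℤ)) * (-1) := by
      intro y hy
      rw [← Finset.sum_filter]
      rw [Finset.sum_congr rfl (fun x _ => by ring :
        ∀ x ∈ P.filter (fun x => x ≤ y), G x * G y * (rk y : ℤ) = (G y * (rk y:ℤ)) * G x)]
      rw [← Finset.mul_sum, h2 y hy]
    rw [Finset.sum_congr rfl hinner, ← Finset.sum_mul]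
    ring
  have hsplit : ∀ p ∈ P ×ˢ P,
      (if p.1 ≤ p.2 then (-1:ℤ)^(d-1) * G p.1 * G p.2 * ((d:ℤ) - 1 - rk p.2 + rk p.1) else 0)
      = (-1:ℤ)^(d-1) * (((d:ℤ) - 1) * (if p.1 ≤ p.2 then G p.1 * G p.2 else 0)
          - (if p.1 ≤ p.2 then G p.1 * G p.2 * (rk p.2 : ℤ) else 0)
          + (if p.1 ≤ p.2 then G p.1 * G p.2 * (rk p.1 : ℤ) else 0)) := by
    intro p _
    by_cases hc : p.1 ≤ p.2
    · simp only [if_pos hc]; ring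
    · simp only [if_neg hc]; ring
  rw [Finset.sum_congr rfl hsplit, ← Finset.mul_sum]
  rw [Finset.sum_add_distrib, Finset.sum_sub_distrib, ← Finset.mul_sum]
  rw [hB, hC, hD]
  have hQ1 : ∑ z ∈ P, (-(G z) * ((rk z : ℤ) - 1))
      = -(∑ z ∈ P, G z * (rk z : ℤ)) + ∑ z ∈ P, G z := by
    rw [← Finset.sum_neg_distrib, ← Finset.sum_add_distrib]
    exact Finset.sum_congr rfl fun z _ => by ring
  have hQ2 : ∑ z ∈ P, ((-1:ℤ)^d * G z * ((d : ℤ) - rk z))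
      = ((-1:ℤ)^d * (d : ℤ)) * (∑ z ∈ P, G z) - (-1:ℤ)^d * ∑ z ∈ P, G z * (rk z : ℤ) := by
    rw [Finset.mul_sum, Finset.mul_sum, ← Finset.sum_sub_distrib]
    exact Finset.sum_congr rfl fun z _ => by ring
  rw [hQ1, hQ2]
  have hdm : (-1:ℤ)^(d-1) = -((-1:ℤ)^d) := by
    rw [neg_one_pow_sub' 1 d hdpos]; ring
  have hcc : (-1:ℤ)^d * (-1:ℤ)^d = 1 := by
    rw [← pow_add]; exact Even.neg_one_pow ⟨d, by omega⟩
  rw [hdm]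
  linear_combination (-(((d:ℤ) - 1)) * (∑ z ∈ P, G z) - (∑ z ∈ P, G z * (rk z : ℤ)) - (d:ℤ)) * hcc
    + (-(d:ℤ) * (1 + (-1:ℤ)^d)) * h3
end

section
/- Let F be a nonempty face of the Minkowski sum P = P_1 + ... + P_r of polytopes in R^d with decomposition F = F_1 + ... + F_r. If the decomposition is exact (dim F = ∑ dim F_i), then for every tuple (G_1, ..., G_r) with G_i a nonempty face of F_i, the set G_1 + ... + G_r is a face of F, and the decomposition of every face of F is exact. -/
/-!
Exactness says that the direction spaces of the `Fᵢ` are independent, so functionals exposing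
the `Gᵢ` in the `Fᵢ` glue to a single functional, which exposes `∑ Gᵢ` in `∑ Fᵢ` because
maximizing a functional over a Minkowski sum splits summand-wise. Conversely, if a face
`H = ∑ Gᵢ` of `F` has `Gᵢ` faces of `Pᵢ`, the functional exposing `F` in `∑ Pᵢ` is maximized on
every `Gᵢ`; by cancellation of compact convex summands its maximizers on `Pᵢ` are exactly `Fᵢ`,
so `Gᵢ ⊆ Fᵢ`, and independence passes to the smaller direction spaces.
-/

open Set
open scoped Pointwise

abbrev Euc (d : ℕ) := EuclideanSpace ℝ (Fin d)

def IsPolytope {d : ℕ} (P : Set (Euc d)) : Prop :=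
  ∃ V : Finset (Euc d), P = convexHull ℝ ↑V

def IsFaceOf {d : ℕ} (P F : Set (Euc d)) : Prop :=
  F.Nonempty ∧ IsExposed ℝ P F

noncomputable def pdim {d : ℕ} (F : Set (Euc d)) : ℕ :=
  Module.finrank ℝ (affineSpan ℝ F).direction

noncomputable def fCount {d : ℕ} (k : ℕ) (P : Set (Euc d)) : ℕ :=
  Nat.card {F : Set (Euc d) // IsFaceOf P F ∧ pdim F = k}

def normalCone {d : ℕ} (P F : Set (Euc d)) : Set (Euc d) :=
  {c | F = {x | x ∈ P ∧ ∀ y ∈ P, (inner ℝ c y : ℝ) ≤ inner ℝ c x}}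

open Module

section IndependentSubspaces

variable {K V ι : Type*} [Field K] [AddCommGroup V] [Module K V] [Fintype ι]

theorem finrank_iSup_eq_sum_iff_iSupIndep [FiniteDimensional K V] (W : ι → Submodule K V) :
    finrank K ↥(⨆ i, W i) = ∑ i, finrank K (W i) ↔ iSupIndep W := by
  classical
  have hdim : finrank K (Π₀ i, W i) = ∑ i, finrank K (W i) := finrank_directSum K fun i => W i
  have h := (DFinsupp.lsum ℕ fun i => (W i).subtype).finrank_range_add_finrank_ker
  rw [← Submodule.iSup_eq_range_dfinsupp_lsum] at h
  rw [iSupIndep_iff_dfinsupp_lsum_injective, ← LinearMap.ker_eq_bot, ← Submodule.finrank_eq_zero,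
    ← hdim, ← h]
  exact Nat.left_eq_add

theorem iSupIndep.exists_linearMap_eq_on {M : Type*} [AddCommGroup M] [Module K M]
    {W : ι → Submodule K V} (hW : iSupIndep W) (f : ι → V →ₗ[K] M) :
    ∃ L : V →ₗ[K] M, ∀ i, ∀ v ∈ W i, L v = f i v := by
  classical
  choose C hC hWC using fun i => (hW i).symm.exists_isCompl
  refine ⟨∑ i, f i ∘ₗ (W i).projection (C i) (hWC i).symm, fun i v hv => ?_⟩
  rw [LinearMap.sum_apply, Finset.sum_eq_single i]
  · simp [Submodule.projection_apply_of_mem_left _ hv]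
  · intro j _ hji
    have hvC : v ∈ C j :=
      hC j (Submodule.mem_iSup_of_mem i (Submodule.mem_iSup_of_mem hji.symm hv))
    simp [Submodule.projection_apply_of_mem_right _ hvC]
  · simp

end IndependentSubspaces

section MinkowskiSum

variable {ι : Type*}

theorem Set.update_mem_of_forall_mem {α : Type*} [DecidableEq ι] {X : ι → Set α} {g : ι → α}
    (hg : ∀ j, g j ∈ X j) {i : ι} {a : α} (ha : a ∈ X i) (j : ι) :
    Function.update g i a j ∈ X j := by
  rcases eq_or_ne j i with rfl | hji
  · simpa using ha
  · simpa [hji] using hg j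

variable [Fintype ι]

theorem Set.fintypeSum_nonempty {E : Type*} [AddCommMonoid E] {X : ι → Set E}
    (h : ∀ i, (X i).Nonempty) : (∑ i, X i).Nonempty :=
  ⟨∑ i, (h i).some, finsetSum_mem_finsetSum _ _ _ fun i _ => (h i).some_mem⟩

variable {E : Type*} [AddCommGroup E]

theorem Set.sum_update_mem_fintypeSum [DecidableEq ι] {X : ι → Set E} {g : ι → E}
    (hg : ∀ j, g j ∈ X j) {i : ι} {a : E} (ha : a ∈ X i) :
    ∑ j, Function.update g i a j ∈ ∑ j, X j :=
  finsetSum_mem_finsetSum _ _ _ fun j _ => update_mem_of_forall_mem hg ha j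

theorem Finset.sum_update_sub_sum [DecidableEq ι] (g : ι → E) (i : ι) (a : E) :
    ∑ j, Function.update g i a j - ∑ j, g j = a - g i := by
  rw [Finset.sum_update_of_mem (Finset.mem_univ i), ← Finset.add_sum_erase _ _ (Finset.mem_univ i),
    Finset.sdiff_singleton_eq_erase]
  abel

theorem vectorSpan_fintypeSum {K : Type*} [Field K] [Module K E] {X : ι → Set E}
    (h : ∀ i, (X i).Nonempty) : vectorSpan K (∑ i, X i) = ⨆ i, vectorSpan K (X i) := by
  classical
  apply le_antisymm
  · rw [vectorSpan_def, Submodule.span_le]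
    rintro _ ⟨x, hx, y, hy, rfl⟩
    obtain ⟨g, hg, rfl⟩ := (mem_fintype_sum X x).1 hx
    obtain ⟨g', hg', rfl⟩ := (mem_fintype_sum X y).1 hy
    change (∑ i, g i) -ᵥ ∑ i, g' i ∈ _
    rw [vsub_eq_sub, ← Finset.sum_sub_distrib]
    exact Submodule.sum_mem _ fun i _ =>
      Submodule.mem_iSup_of_mem i (vsub_mem_vectorSpan K (hg i) (hg' i))
  · refine iSup_le fun i => ?_
    rw [vectorSpan_def, Submodule.span_le]
    rintro _ ⟨a, ha, b, hb, rfl⟩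
    choose g hg using h
    have hab : a -ᵥ b = ∑ j, Function.update g i a j -ᵥ ∑ j, Function.update g i b j := by
      rw [vsub_eq_sub, vsub_eq_sub, ← sub_sub_sub_cancel_right (∑ j, Function.update g i a j)
        _ (∑ j, g j), Finset.sum_update_sub_sum, Finset.sum_update_sub_sum,
        sub_sub_sub_cancel_right]
    change a -ᵥ b ∈ _
    rw [hab]
    exact vsub_mem_vectorSpan K (sum_update_mem_fintypeSum hg ha) (sum_update_mem_fintypeSum hg hb)

end MinkowskiSum

section ExposedSets

variable {ι : Type*} [Fintype ι] {E : Type*} [AddCommGroup E] [TopologicalSpace E] [Module ℝ E]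

namespace ContinuousLinearMap

theorem toExposed_congr {l l' : StrongDual ℝ E} {A : Set E}
    (h : ∀ v ∈ vectorSpan ℝ A, l v = l' v) : l.toExposed A = l'.toExposed A := by
  have hdiff : ∀ x ∈ A, ∀ y ∈ A, l y - l x = l' y - l' x := fun x hx y hy => by
    simpa [map_sub] using h _ (vsub_mem_vectorSpan ℝ hy hx)
  ext x
  refine ⟨fun ⟨hx, hmax⟩ => ⟨hx, fun y hy => ?_⟩, fun ⟨hx, hmax⟩ => ⟨hx, fun y hy => ?_⟩⟩ <;>
  · linarith [hdiff x hx y hy, hmax y hy]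

theorem mem_toExposed_of_sum_mem_toExposed (l : StrongDual ℝ E) {X : ι → Set E} {g : ι → E}
    (hg : ∀ j, g j ∈ X j) (h : ∑ j, g j ∈ l.toExposed (∑ j, X j)) (i : ι) :
    g i ∈ l.toExposed (X i) := by
  classical
  refine ⟨hg i, fun y hy => ?_⟩
  have hle := h.2 _ (sum_update_mem_fintypeSum hg hy)
  have hdiff := congrArg l (Finset.sum_update_sub_sum g i y)
  rw [map_sub, map_sub] at hdiff
  linarith

theorem toExposed_fintypeSum (l : StrongDual ℝ E) (X : ι → Set E) :
    l.toExposed (∑ i, X i) = ∑ i, l.toExposed (X i) := by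
  ext x
  constructor
  · intro hx
    obtain ⟨g, hg, rfl⟩ := (mem_fintype_sum X x).1 hx.1
    exact (mem_fintype_sum _ _).2 ⟨g, l.mem_toExposed_of_sum_mem_toExposed hg hx, rfl⟩
  · intro hx
    obtain ⟨g, hg, rfl⟩ := (mem_fintype_sum _ x).1 hx
    refine ⟨finsetSum_mem_finsetSum _ _ _ fun i _ => (hg i).1, fun y hy => ?_⟩
    obtain ⟨g', hg', rfl⟩ := (mem_fintype_sum X y).1 hy
    simp only [map_sum]
    exact Finset.sum_le_sum fun i _ => (hg i).2 _ (hg' i)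

theorem subset_toExposed_of_sum_subset (l : StrongDual ℝ E) {X Y : ι → Set E}
    (hne : ∀ i, (X i).Nonempty) (hXY : ∀ i, X i ⊆ Y i)
    (h : ∑ i, X i ⊆ l.toExposed (∑ i, Y i)) (i : ι) : X i ⊆ l.toExposed (Y i) := by
  classical
  intro x hx
  choose g hg using hne
  simpa using l.mem_toExposed_of_sum_mem_toExposed
    (fun j => hXY j (update_mem_of_forall_mem hg hx j)) (h (sum_update_mem_fintypeSum hg hx)) i

end ContinuousLinearMap

end ExposedSets

section FacesOfSums

variable {ι : Type*} [Fintype ι] {E : Type*} [NormedAddCommGroup E] [NormedSpace ℝ E]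

theorem eq_of_fintypeSum_eq_of_subset {X Y : ι → Set E} (hXc : ∀ i, IsCompact (X i))
    (hXne : ∀ i, (X i).Nonempty) (hXconv : ∀ i, Convex ℝ (X i)) (hXY : ∀ i, X i ⊆ Y i)
    (hsum : ∑ i, X i = ∑ i, Y i) (i : ι) : X i = Y i := by
  refine (hXY i).antisymm fun y hy => ?_
  by_contra hyX
  obtain ⟨f, u, hfX, hfy⟩ := geometric_hahn_banach_closed_point (hXconv i) (hXc i).isClosed hyX
  have hmax : ∀ j, (f.toExposed (X j)).Nonempty := fun j => by
    obtain ⟨x, hx, hxmax⟩ := (hXc j).exists_isMaxOn (hXne j) f.continuous.continuousOn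
    exact ⟨x, hx, fun y hy => hxmax hy⟩
  choose x hx using hmax
  -- `∑ xⱼ` maximizes `f` over `∑ Xⱼ = ∑ Yⱼ`, so `xᵢ` maximizes `f` over `Yᵢ ∋ y`.
  have hsx : ∑ j, x j ∈ f.toExposed (∑ j, Y j) := by
    rw [← hsum, f.toExposed_fintypeSum]
    exact finsetSum_mem_finsetSum _ _ _ fun j _ => hx j
  have := (f.mem_toExposed_of_sum_mem_toExposed (fun j => hXY j (hx j).1) hsx i).2 y hy
  linarith [hfX _ (hx i).1]

theorem subset_of_isExposed_fintypeSum {P F G : ι → Set E} (hFc : ∀ i, IsCompact (F i))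
    (hFne : ∀ i, (F i).Nonempty) (hFconv : ∀ i, Convex ℝ (F i)) (hFP : ∀ i, F i ⊆ P i)
    (hexp : IsExposed ℝ (∑ i, P i) (∑ i, F i)) (hGne : ∀ i, (G i).Nonempty)
    (hGP : ∀ i, G i ⊆ P i) (hGF : ∑ i, G i ⊆ ∑ i, F i) (i : ι) : G i ⊆ F i := by
  obtain ⟨l, hl⟩ := hexp (fintypeSum_nonempty hFne)
  have hFl : ∀ j, F j ⊆ l.toExposed (P j) :=
    l.subset_toExposed_of_sum_subset hFne hFP hl.le
  rw [eq_of_fintypeSum_eq_of_subset hFc hFne hFconv hFl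
    (by rw [← l.toExposed_fintypeSum]; exact hl) i]
  exact l.subset_toExposed_of_sum_subset hGne hGP (hGF.trans hl.le) i

theorem isExposed_fintypeSum_of_iSupIndep [FiniteDimensional ℝ E] {F G : ι → Set E}
    (hF : iSupIndep fun i => vectorSpan ℝ (F i)) (hG : ∀ i, IsExposed ℝ (F i) (G i))
    (hGne : ∀ i, (G i).Nonempty) : IsExposed ℝ (∑ i, F i) (∑ i, G i) := by
  intro _
  choose l hl using fun i => hG i (hGne i)
  obtain ⟨L, hL⟩ := hF.exists_linearMap_eq_on fun i => (l i : E →ₗ[ℝ] ℝ)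
  refine ⟨LinearMap.toContinuousLinearMap L, ?_⟩
  change _ = ContinuousLinearMap.toExposed _ _
  rw [ContinuousLinearMap.toExposed_fintypeSum]
  exact Finset.sum_congr rfl fun i _ =>
    (hl i).trans (ContinuousLinearMap.toExposed_congr fun v hv => (hL i v hv).symm)

end FacesOfSums

theorem pdim_eq_finrank_vectorSpan {d : ℕ} (A : Set (Euc d)) :
    pdim A = finrank ℝ (vectorSpan ℝ A) := by
  rw [pdim, direction_affineSpan]

/-- If a face `F = F₁ + ⋯ + F_r` of a Minkowski sum has an exact decomposition,
then every tuple of faces `Gᵢ ⊆ Fᵢ` sums to a face of `F`, and the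
decomposition of every face of `F` is exact. -/
theorem exact_decomposition_subfaces (d r : ℕ) (P F : Fin r → Set (Euc d))
    (hP : ∀ i, IsPolytope (P i)) (hF : ∀ i, IsFaceOf (P i) (F i))
    (Fs : Set (Euc d)) (hFs : Fs = ∑ i, F i)
    (hface : IsFaceOf (∑ i, P i) Fs)
    (hexact : pdim Fs = ∑ i, pdim (F i)) :
    (∀ G : Fin r → Set (Euc d), (∀ i, IsFaceOf (F i) (G i)) →
      IsFaceOf Fs (∑ i, G i)) ∧
    (∀ H : Set (Euc d), IsFaceOf Fs H →
      ∀ G : Fin r → Set (Euc d), (∀ i, IsFaceOf (P i) (G i)) → H = ∑ i, G i →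
        pdim H = ∑ i, pdim (G i)) := by
  subst hFs
  have hFne : ∀ i, (F i).Nonempty := fun i => (hF i).1
  have hindep : iSupIndep fun i => vectorSpan ℝ (F i) := by
    rw [← finrank_iSup_eq_sum_iff_iSupIndep, ← vectorSpan_fintypeSum hFne]
    simpa only [pdim_eq_finrank_vectorSpan] using hexact
  refine ⟨fun G hG => ⟨fintypeSum_nonempty fun i => (hG i).1,
    isExposed_fintypeSum_of_iSupIndep hindep (fun i => (hG i).2) fun i => (hG i).1⟩, ?_⟩
  rintro _ hH G hG rfl
  have hPc : ∀ i, IsCompact (P i) ∧ Convex ℝ (P i) := fun i => by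
    obtain ⟨V, hV⟩ := hP i
    rw [hV]
    exact ⟨V.finite_toSet.isCompact_convexHull ℝ, convex_convexHull ℝ _⟩
  have hGF : ∀ i, G i ⊆ F i :=
    subset_of_isExposed_fintypeSum (fun i => (hF i).2.isCompact (hPc i).1) hFne
      (fun i => (hF i).2.convex (hPc i).2) (fun i => (hF i).2.subset) hface.2
      (fun i => (hG i).1) (fun i => (hG i).2.subset) hH.2.subset
  have hexactG := (finrank_iSup_eq_sum_iff_iSupIndep _).2
    (hindep.mono fun i => vectorSpan_mono ℝ (hGF i))
  rw [pdim_eq_finrank_vectorSpan, vectorSpan_fintypeSum fun i => (hG i).1, hexactG]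
  simp only [pdim_eq_finrank_vectorSpan]
end
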